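/- Let A be a commutative Poisson algebra, S, 𝒬 ∈ A with {𝒬, S} = 0, {𝒬, 𝒬} = 0, and {S, S} = -2·𝒬·S. Define D(f) := {𝒬, f} and ⟦f,g⟧_J := {{S,f},g} - {𝒬, f·g}. Then D(⟦f,g⟧_J) = ⟦D(f), g⟧_J + ⟦f, D(g)⟧_J for all f, g ∈ A. -/
import Mathlib


structure PoissonBracket (A : Type*) [CommRing A] where
  br : A → A → A
  add_left : ∀ a b c : A, br (a + b) c = br a c + br b c
  add_right : ∀ a b c : A, br a (b + c) = br a b + br a c
  alt : ∀ a : A, br a a = 0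
  antisymm : ∀ a b : A, br a b = -br b a
  jacobi : ∀ a b c : A, br a (br b c) + br b (br c a) + br c (br a b) = 0
  leibniz : ∀ a b c : A, br a (b * c) = br a b * c + b * br a c

namespace PoissonBracket

variable {A : Type*} [CommRing A] (P : PoissonBracket A)

lemma br_zero_right (a : A) : P.br a 0 = 0 := by
  have h := P.add_right a 0 0
  rw [add_zero] at h
  linear_combination -h

lemma br_zero_left (a : A) : P.br 0 a = 0 := by
  rw [P.antisymm, P.br_zero_right, neg_zero]

lemma br_neg_right (a b : A) : P.br a (-b) = -P.br a b := by
  have h := P.add_right a b (-b)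
  rw [add_neg_cancel, P.br_zero_right] at h
  linear_combination -h

lemma deriv (a b c : A) : P.br a (P.br b c) = P.br (P.br a b) c + P.br b (P.br a c) := by
  have h := P.jacobi a b c
  have h1 : P.br b (P.br c a) = -P.br b (P.br a c) := by
    rw [P.antisymm c a, P.br_neg_right]
  have h2 : P.br c (P.br a b) = -P.br (P.br a b) c := by
    rw [P.antisymm]
  rw [h1, h2] at h
  linear_combination h

end PoissonBracket

theorem Q_derivation_of_jacobi_bracket {A : Type*} [CommRing A] (P : PoissonBracket A)
    (S Q : A) (hQS : P.br Q S = 0) (hQQ : P.br Q Q = 0)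
    (hSS : P.br S S = -2 * Q * S) (f g : A) :
    P.br Q (P.br (P.br S f) g - P.br Q (f * g))
      = (P.br (P.br S (P.br Q f)) g - P.br Q (P.br Q f * g))
        + (P.br (P.br S f) (P.br Q g) - P.br Q (f * P.br Q g)) := by
  have hQSf : P.br Q (P.br S f) = P.br S (P.br Q f) := by
    rw [P.deriv Q S f, hQS, P.br_zero_left, zero_add]
  have key : P.br Q (P.br (P.br S f) g)
      = P.br (P.br S (P.br Q f)) g + P.br (P.br S f) (P.br Q g) := by
    rw [P.deriv Q (P.br S f) g, hQSf]
  have hsub : P.br (P.br S f) g - P.br Q (f * g)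
      = P.br (P.br S f) g + (-(P.br Q f * g) + -(f * P.br Q g)) := by
    rw [P.leibniz Q f g]; ring
  rw [hsub, P.add_right, P.add_right, P.br_neg_right, P.br_neg_right, key]
  ring
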